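/- Let W : ℕ → A be a uniformly recurrent infinite word over a finite alphabet A that is not eventually periodic. Then there exist two distinct bi-infinite words W₁, W₂ : ℤ → A, both uniformly recurrent, whose sets of finite factors both equal F(W), and such that W₁(n) = W₂(n) for all n < 0 while W₁(n) ≠ W₂(n) for some n ≥ 0 (i.e. W₁ = U·V₁ and W₂ = U·V₂ with a common left-infinite part U and distinct right-infinite parts V₁ ≠ V₂). -/
import Mathlib


/-- The finite word `u` occurs in the infinite word `W` at position `i`. -/
def occursAt {A : Type*} (W : ℕ → A) (u : List A) (i : ℕ) : Prop :=
  u = (List.range u.length).map (fun j => W (i + j))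

/-- `u` is a factor (subword) of the infinite word `W`. -/
def IsFactor {A : Type*} (W : ℕ → A) (u : List A) : Prop :=
  ∃ i, occursAt W u i

/-- The set of factors of `W`. -/
def Factors {A : Type*} (W : ℕ → A) : Set (List A) :=
  {u | IsFactor W u}

/-- `W` is uniformly recurrent. -/
def UniformlyRecurrent {A : Type*} (W : ℕ → A) : Prop :=
  ∀ v, IsFactor W v → ∃ N : ℕ, ∀ u, IsFactor W u → u.length = N → v <:+: u

/-- `W` is eventually periodic. -/
def EventuallyPeriodic {A : Type*} (W : ℕ → A) : Prop :=
  ∃ p, 1 ≤ p ∧ ∃ N, ∀ n, N ≤ n → W (n + p) = W n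

/-- The finite word `u` occurs in the bi-infinite word `Z` at position `i`. -/
def occursAtZ {A : Type*} (Z : ℤ → A) (u : List A) (i : ℤ) : Prop :=
  u = (List.range u.length).map (fun j => Z (i + j))

/-- `u` is a factor of the bi-infinite word `Z`. -/
def IsFactorZ {A : Type*} (Z : ℤ → A) (u : List A) : Prop :=
  ∃ i : ℤ, occursAtZ Z u i

/-- The set of factors of a bi-infinite word. -/
def FactorsZ {A : Type*} (Z : ℤ → A) : Set (List A) :=
  {u | IsFactorZ Z u}

/-- A bi-infinite word is uniformly recurrent. -/
def UniformlyRecurrentZ {A : Type*} (Z : ℤ → A) : Prop :=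
  ∀ v, IsFactorZ Z v → ∃ N : ℕ, ∀ u, IsFactorZ Z u → u.length = N → v <:+: u

section AuxLemmas

variable {A : Type*}

lemma bindRange_eq (L : ℕ) :
    ((List.range L) >>= fun a => pure ((a : ℤ))) = (List.range L).map (fun a : ℕ => (a : ℤ)) := by
  rw [bind_pure_comp]
  rfl

lemma occursAt_iff (W : ℕ → A) (u : List A) (i : ℕ) :
    occursAt W u i ↔ ∀ j : ℕ, ∀ hj : j < u.length, u[j] = W (i + j) := by
  unfold occursAt
  constructor
  · intro h j hj
    rw [List.getElem_of_eq h hj]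
    simp
  · intro h
    apply List.ext_getElem (by simp)
    intro j h1 h2
    simpa using h j h1

lemma occursAtZ_iff (Z : ℤ → A) (u : List A) (i : ℤ) :
    occursAtZ Z u i ↔ ∀ j : ℕ, ∀ hj : j < u.length, u[j] = Z (i + j) := by
  unfold occursAtZ
  rw [show ((List.range u.length : List ℕ) : List ℤ) = (List.range u.length).map (fun a : ℕ => (a : ℤ)) from bindRange_eq u.length]
  rw [List.map_map]
  constructor
  · intro h j hj
    rw [List.getElem_of_eq h hj]
    simp
  · intro h
    apply List.ext_getElem (by simp)
    intro j h1 h2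
    simpa using h j h1

lemma window_isFactor (W : ℕ → A) (i L : ℕ) :
    IsFactor W ((List.range L).map (fun j => W (i + j))) :=
  ⟨i, (occursAt_iff _ _ _).2 (by intro j hj; simp at hj ⊢)⟩

lemma windowZ_isFactorZ (Z : ℤ → A) (c : ℤ) (L : ℕ) :
    IsFactorZ Z ((List.range L).map (fun j : ℕ => Z (c + j))) :=
  ⟨c, (occursAtZ_iff _ _ _).2 (by intro j hj; simp at hj ⊢)⟩

lemma IsFactorZ.of_infix {Z : ℤ → A} {u v : List A}
    (hv : v <:+: u) (hu : IsFactorZ Z u) : IsFactorZ Z v := by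
  obtain ⟨s, t, rfl⟩ := hv
  obtain ⟨i, hi⟩ := hu
  rw [occursAtZ_iff] at hi
  refine ⟨i + s.length, (occursAtZ_iff _ _ _).2 ?_⟩
  intro j hj
  have hlen : s.length + j < (s ++ v ++ t).length := by
    simp only [List.length_append]; omega
  have h1 : (s ++ v ++ t)[s.length + j]'hlen = v[j]'hj := by
    rw [List.getElem_append_left (by simp only [List.length_append]; omega),
      List.getElem_append_right (by omega)]
    congr 1
    omega
  rw [← h1, hi (s.length + j) hlen]
  congr 1
  push_cast
  ring

end AuxLemmas

lemma exists_rightSpecial {A : Type*} [Fintype A] (W : ℕ → A)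
    (hnp : ¬ EventuallyPeriodic W) (n : ℕ) :
    ∃ (u : List A) (a b : A), u.length = n ∧ a ≠ b ∧
      IsFactor W (u ++ [a]) ∧ IsFactor W (u ++ [b]) := by
  by_contra hcon
  push_neg at hcon
  have hun : ∀ (u : List A) (a b : A), u.length = n →
      IsFactor W (u ++ [a]) → IsFactor W (u ++ [b]) → a = b := by
    intro u a b hl h1 h2
    by_contra hne
    exact hcon u a b hl hne h1 h2
  -- every position's length-(n+1) window extends its length-n window
  have hwin : ∀ m : ℕ, IsFactor W (((List.range n).map fun t => W (m + t)) ++ [W (m + n)]) := by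
    intro m
    have h := window_isFactor W m (n + 1)
    rwa [List.range_succ, List.map_append, List.map_singleton] at h
  have key : ∀ i j : ℕ, i < j → (∀ t, t < n → W (i + t) = W (j + t)) →
      EventuallyPeriodic W := by
    intro i j hlt hagree
    have claim : ∀ k, W (i + k) = W (j + k) := by
      intro k
      induction k using Nat.strong_induction_on with
      | _ k IH =>
        rcases lt_or_ge k n with hk | hk
        · exact hagree k hk
        · have hmn : (k - n) + n = k := by omega
          have hweq : ((List.range n).map fun t => W (i + (k - n) + t)) =
              ((List.range n).map fun t => W (j + (k - n) + t)) := by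
            apply List.map_congr_left
            intro t ht
            rw [List.mem_range] at ht
            have h := IH ((k - n) + t) (by omega)
            calc W (i + (k - n) + t) = W (i + ((k - n) + t)) := by rw [Nat.add_assoc]
              _ = W (j + ((k - n) + t)) := h
              _ = W (j + (k - n) + t) := by rw [Nat.add_assoc]
          have h1 := hwin (i + (k - n))
          have h2 := hwin (j + (k - n))
          rw [← hweq] at h2
          have := hun _ _ _ (by simp) h1 h2
          calc W (i + k) = W (i + (k - n) + n) := by congr 1; omega
            _ = W (j + (k - n) + n) := this
            _ = W (j + k) := by congr 1; omega
    refine ⟨j - i, by omega, i, fun m hm => ?_⟩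
    have h := claim (m - i)
    calc W (m + (j - i)) = W (j + (m - i)) := by congr 1; omega
      _ = W (i + (m - i)) := h.symm
      _ = W m := by congr 1; omega
  obtain ⟨i, j, hij, hx⟩ :=
    Finite.exists_ne_map_eq_of_infinite (fun i : ℕ => fun t : Fin n => W (i + t))
  have hagree : ∀ t, t < n → W (i + t) = W (j + t) := fun t ht => congrFun hx ⟨t, ht⟩
  rcases lt_or_gt_of_ne hij with h | h
  · exact hnp (key i j h hagree)
  · exact hnp (key j i h (fun t ht => (hagree t ht).symm))

/-- For a uniformly recurrent non-(eventually-)periodic word `W` there exist two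
distinct uniformly recurrent bi-infinite words with the same factors as `W`,
agreeing at all negative positions and differing at some nonnegative position. -/
theorem exists_two_equivalent_biinfinite_words {A : Type*} [Fintype A] (W : ℕ → A)
    (hUR : UniformlyRecurrent W) (hnp : ¬ EventuallyPeriodic W) :
    ∃ W₁ W₂ : ℤ → A, W₁ ≠ W₂ ∧
      UniformlyRecurrentZ W₁ ∧ UniformlyRecurrentZ W₂ ∧
      FactorsZ W₁ = Factors W ∧ FactorsZ W₂ = Factors W ∧
      (∀ n : ℤ, n < 0 → W₁ n = W₂ n) ∧
      (∃ n : ℤ, 0 ≤ n ∧ W₁ n ≠ W₂ n) := by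
  classical
  -- choose right special factors of every length
  choose r a b hrlen hab hfa hfb using exists_rightSpecial W hnp
  choose ia hia using hfa
  choose ib hib using hfb
  -- letter extraction
  have hlen' : ∀ n, (r n ++ [a n]).length = n + 1 := by
    intro n; simp [hrlen]
  have hlen'' : ∀ n, (r n ++ [b n]).length = n + 1 := by
    intro n; simp [hrlen]
  have hWa : ∀ n, W (ia n + n) = a n := by
    intro n
    have h := (occursAt_iff _ _ _).1 (hia n) n (by rw [hlen']; omega)
    rw [← h, List.getElem_append_right (by rw [hrlen])]
    simp [hrlen]
  have hWb : ∀ n, W (ib n + n) = b n := by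
    intro n
    have h := (occursAt_iff _ _ _).1 (hib n) n (by rw [hlen'']; omega)
    rw [← h, List.getElem_append_right (by rw [hrlen])]
    simp [hrlen]
  have hWr : ∀ n t, t < n → W (ia n + t) = W (ib n + t) := by
    intro n t ht
    have h1 := (occursAt_iff _ _ _).1 (hia n) t (by rw [hlen']; omega)
    have h2 := (occursAt_iff _ _ _).1 (hib n) t (by rw [hlen'']; omega)
    rw [List.getElem_append_left (by rw [hrlen]; omega)] at h1 h2
    rw [← h1, ← h2]
  -- the ultrafilter limit machinery
  set U : Ultrafilter ℕ := Filter.hyperfilter ℕ with hU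
  have hex : ∀ f : ℕ → A, ∃ x : A, {n | f n = x} ∈ U := by
    intro f
    by_contra h
    push_neg at h
    have hmem : (⋂ x : A, {n | f n = x}ᶜ) ∈ U :=
      (Filter.iInter_mem).2 fun x => (Ultrafilter.compl_mem_iff_notMem).2 (h x)
    obtain ⟨n, hn⟩ := U.nonempty_of_mem hmem
    simp only [Set.mem_iInter, Set.mem_compl_iff, Set.mem_setOf_eq] at hn
    exact hn (f n) rfl
  choose lim hlim using hex
  have hcof : ∀ x : ℤ, {n : ℕ | x ≤ (n : ℤ)} ∈ U := by
    intro x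
    apply Filter.mem_hyperfilter_of_finite_compl
    apply Set.Finite.subset (Set.finite_Iio x.toNat)
    intro n hn
    simp only [Set.mem_compl_iff, Set.mem_setOf_eq, not_le] at hn
    simp only [Set.mem_Iio]
    omega
  -- the two bi-infinite words
  set Z1 : ℕ → ℤ → A := fun n k => W ((ia n + n + k).toNat) with hZ1
  set Z2 : ℕ → ℤ → A := fun n k => W ((ib n + n + k).toNat) with hZ2
  set W₁ : ℤ → A := fun k => lim (fun n => Z1 n k) with hW₁
  set W₂ : ℤ → A := fun k => lim (fun n => Z2 n k) with hW₂
  -- windows of W₁ / W₂ are factors of W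
  have hwin : ∀ (Z : ℕ → ℤ → A) (ii : ℕ → ℕ), (Z = fun n k => W (((ii n : ℤ) + n + k).toNat)) →
      ∀ (c : ℤ) (L : ℕ), ∃ m : ℕ, ∀ j : ℕ, j < L →
        lim (fun n => Z n (c + j)) = W (m + j) := by
    intro Z ii hZ c L
    have hS : ((⋂ j ∈ Finset.range L, {n | Z n (c + j) = lim (fun n => Z n (c + j))})
        ∩ {n : ℕ | -c ≤ (n : ℤ)}) ∈ U := by
      apply Filter.inter_mem
      · exact (Filter.biInter_finset_mem _).2 fun j _ => hlim (fun n => Z n (c + j))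
      · exact hcof (-c)
    obtain ⟨n, hn1, hn2⟩ := U.nonempty_of_mem hS
    simp only [Set.mem_iInter, Set.mem_setOf_eq, Finset.mem_range] at hn1 hn2
    refine ⟨((ii n : ℤ) + n + c).toNat, ?_⟩
    intro j hj
    rw [← hn1 j hj, hZ]
    show W (((ii n : ℤ) + n + (c + j)).toNat) = W (((ii n : ℤ) + n + c).toNat + j)
    congr 1
    omega
  have hw1 : ∀ (c : ℤ) (L : ℕ), ∃ m : ℕ, ∀ j : ℕ, j < L → W₁ (c + j) = W (m + j) :=
    hwin Z1 ia hZ1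
  have hw2 : ∀ (c : ℤ) (L : ℕ), ∃ m : ℕ, ∀ j : ℕ, j < L → W₂ (c + j) = W (m + j) :=
    hwin Z2 ib hZ2
  -- every factor of W₁ / W₂ is a factor of W
  have hsub : ∀ Y : ℤ → A, (∀ (c : ℤ) (L : ℕ), ∃ m : ℕ, ∀ j : ℕ, j < L → Y (c + j) = W (m + j)) →
      ∀ u, IsFactorZ Y u → IsFactor W u := by
    rintro Y hY u ⟨c, hc⟩
    obtain ⟨m, hm⟩ := hY c u.length
    refine ⟨m, (occursAt_iff _ _ _).2 ?_⟩
    intro j hj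
    rw [(occursAtZ_iff _ _ _).1 hc j hj, hm j hj]
  -- equality of factor sets
  have hFZ : ∀ Y : ℤ → A, (∀ u, IsFactorZ Y u → IsFactor W u) → FactorsZ Y = Factors W := by
    intro Y hY
    ext u
    constructor
    · exact fun hu => hY u hu
    · intro hv
      obtain ⟨N, hN⟩ := hUR u hv
      have hwinz := windowZ_isFactorZ Y 0 N
      have hNfac : IsFactor W ((List.range N).map (fun j : ℕ => Y (0 + j))) := hY _ hwinz
      have hinf : u <:+: _ := hN _ hNfac (by simp)
      exact IsFactorZ.of_infix hinf hwinz
  -- uniform recurrence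
  have hURZ : ∀ Y : ℤ → A, (∀ u, IsFactorZ Y u → IsFactor W u) → UniformlyRecurrentZ Y := by
    intro Y hY v hv
    obtain ⟨N, hN⟩ := hUR v (hY v hv)
    exact ⟨N, fun u hu hul => hN u (hY u hu) hul⟩
  have hsub1 := hsub W₁ hw1
  have hsub2 := hsub W₂ hw2
  -- values at 0
  have ha0 : W₁ 0 = lim a := by
    show lim (fun n => Z1 n 0) = lim a
    congr 1
    funext n
    show W (((ia n : ℤ) + n + 0).toNat) = a n
    rw [show ((ia n : ℤ) + n + 0).toNat = ia n + n by omega]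
    exact hWa n
  have hb0 : W₂ 0 = lim b := by
    show lim (fun n => Z2 n 0) = lim b
    congr 1
    funext n
    show W (((ib n : ℤ) + n + 0).toNat) = b n
    rw [show ((ib n : ℤ) + n + 0).toNat = ib n + n by omega]
    exact hWb n
  have hne0 : W₁ 0 ≠ W₂ 0 := by
    rw [ha0, hb0]
    intro he
    obtain ⟨n, hn1, hn2⟩ := U.nonempty_of_mem (Filter.inter_mem (hlim a) (hlim b))
    simp only [Set.mem_setOf_eq] at hn1 hn2
    exact hab n (by rw [hn1, hn2, he])
  -- agreement at negative positions
  have hneg : ∀ k : ℤ, k < 0 → W₁ k = W₂ k := by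
    intro k hk
    have hS : ({n | Z1 n k = lim (fun n => Z1 n k)} ∩ {n | Z2 n k = lim (fun n => Z2 n k)}
        ∩ {n : ℕ | -k ≤ (n : ℤ)}) ∈ U :=
      Filter.inter_mem (Filter.inter_mem (hlim _) (hlim _)) (hcof (-k))
    obtain ⟨n, ⟨h1, h2⟩, h3⟩ := U.nonempty_of_mem hS
    simp only [Set.mem_setOf_eq] at h1 h2 h3
    show lim (fun n => Z1 n k) = lim (fun n => Z2 n k)
    rw [← h1, ← h2]
    show W (((ia n : ℤ) + n + k).toNat) = W (((ib n : ℤ) + n + k).toNat)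
    rw [show ((ia n : ℤ) + n + k).toNat = ia n + ((n : ℤ) + k).toNat by omega,
      show ((ib n : ℤ) + n + k).toNat = ib n + ((n : ℤ) + k).toNat by omega]
    exact hWr n _ (by omega)
  exact ⟨W₁, W₂, fun he => hne0 (by rw [he]), hURZ W₁ hsub1, hURZ W₂ hsub2,
    hFZ W₁ hsub1, hFZ W₂ hsub2, hneg, 0, le_refl 0, hne0⟩
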